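/- Set Δ = σᵤ = Σ₀ = 1. For each integer N ≥ 3 let β̂_N = (β̂_{N,1},…,β̂_{N,N}) denote Kyle's N-period equilibrium and define T̃_N : ℝ → ℝ by letting T̃_N(β) be the (N−2)-th coordinate of the N-period policy-iteration map applied to the vector whose n-th entry is β̂_{N,n} for n ≠ N−2 and is β in position N−2. Then for every N ≥ 4 one has T̃_N′(β̂_{N,N−2}) = T̃_{N−1}′(β̂_{N−1,N−3}); that is, the derivative of the (N−2)-coordinate policy-iteration map at the equilibrium does not depend on N for N ≥ 3. -/

import Mathlib

/-- The posterior-variance sequence `Σₙ^β` of the `N`-period policy-iteration map: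
`Σ₀^β = Sig0` and `Σₙ^β = Σ_{n-1}^β σu²/(βₙ² Σ_{n-1}^β Δ + σu²)`. -/
noncomputable def kSig (Δ σu Sig0 : ℝ) (β : ℕ → ℝ) : ℕ → ℝ
  | 0 => Sig0
  | n + 1 =>
      kSig Δ σu Sig0 β n * σu ^ 2 /
        ((β (n + 1)) ^ 2 * kSig Δ σu Sig0 β n * Δ + σu ^ 2)

/-- Kyle's lambda `λₙ^β = βₙ Σ_{n-1}^β/(βₙ² Σ_{n-1}^β Δ + σu²)`. -/
noncomputable def kLam (Δ σu Sig0 : ℝ) (β : ℕ → ℝ) (n : ℕ) : ℝ :=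
  β n * kSig Δ σu Sig0 β (n - 1) /
    ((β n) ^ 2 * kSig Δ σu Sig0 β (n - 1) * Δ + σu ^ 2)

/-- Backward recursion for `αₙ^β`, indexed by the number of remaining steps `k = N - n`:
`α_N^β = 0` and `α_{n-1}^β = 1/(4 λₙ^β (1 - αₙ^β λₙ^β))`. -/
noncomputable def kAlphaAux (Δ σu Sig0 : ℝ) (N : ℕ) (β : ℕ → ℝ) : ℕ → ℝ
  | 0 => 0
  | k + 1 =>
      1 / (4 * kLam Δ σu Sig0 β (N - k) *
        (1 - kAlphaAux Δ σu Sig0 N β k * kLam Δ σu Sig0 β (N - k)))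

/-- `αₙ^β` for the `N`-period policy-iteration map. -/
noncomputable def kAlpha (Δ σu Sig0 : ℝ) (N : ℕ) (β : ℕ → ℝ) (n : ℕ) : ℝ :=
  kAlphaAux Δ σu Sig0 N β (N - n)

/-- The `n`-th coordinate of the `N`-period policy-iteration map:
`T(β)ₙ = (1 - 2 αₙ^β λₙ^β)/(2 Δ λₙ^β (1 - αₙ^β λₙ^β))`. -/
noncomputable def kT (Δ σu Sig0 : ℝ) (N : ℕ) (β : ℕ → ℝ) (n : ℕ) : ℝ :=
  (1 - 2 * kAlpha Δ σu Sig0 N β n * kLam Δ σu Sig0 β n) /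
    (2 * Δ * kLam Δ σu Sig0 β n *
      (1 - kAlpha Δ σu Sig0 N β n * kLam Δ σu Sig0 β n))

/-- The domain of the `N`-period policy-iteration map: all denominators
appearing in `Σ`, `λ`, `α` and `T` are nonzero. -/
def kDom (Δ σu Sig0 : ℝ) (N : ℕ) (β : ℕ → ℝ) : Prop :=
  ∀ n, 1 ≤ n → n ≤ N →
    (β n) ^ 2 * kSig Δ σu Sig0 β (n - 1) * Δ + σu ^ 2 ≠ 0 ∧
    kLam Δ σu Sig0 β n ≠ 0 ∧
    1 - kAlpha Δ σu Sig0 N β n * kLam Δ σu Sig0 β n ≠ 0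

/-- Kyle's `N`-period equilibrium data: `b` is the autonomous sequence
(`b N = 1`, `b n ∈ (0,1)` for `n < N`, backward recursion), `S` the equilibrium
variance sequence and `βh` the equilibrium trading intensities. -/
structure KyleEq (Δ σu Sig0 : ℝ) (N : ℕ) (b S βh : ℕ → ℝ) : Prop where
  hbN : b N = 1
  hbIoo : ∀ n, 1 ≤ n → n < N → b n ∈ Set.Ioo (0 : ℝ) 1
  hbrec : ∀ n, 2 ≤ n → n ≤ N →
    (b n) ^ 2 = (b (n - 1)) ^ 2 / ((1 - (b (n - 1)) ^ 2) ^ 2 * (1 + (b (n - 1)) ^ 2))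
  hS0 : S 0 = Sig0
  hSrec : ∀ n, 1 ≤ n → n ≤ N → S n = S (n - 1) / (1 + (b n) ^ 2)
  hβ : ∀ n, 1 ≤ n → n ≤ N → βh n = b n * σu / Real.sqrt (S (n - 1) * Δ)

/-- The reversed (index-from-the-end) autonomous sequence: `tb 1 = 1` and, for each
`k ≥ 1`, `tb (k+1)` is the number in `(0,1)` with
`tb k² = tb (k+1)²/((1 - tb (k+1)²)² (1 + tb (k+1)²))`.  Kyle's `N`-period
autonomous coefficients are `b̂_{N,n} = tb (N - n + 1)`. -/
def KyleTB (tb : ℕ → ℝ) : Prop :=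
  tb 1 = 1 ∧
  ∀ k, 1 ≤ k →
    tb (k + 1) ∈ Set.Ioo (0 : ℝ) 1 ∧
    (tb k) ^ 2 =
      (tb (k + 1)) ^ 2 / ((1 - (tb (k + 1)) ^ 2) ^ 2 * (1 + (tb (k + 1)) ^ 2))

/-- Kyle's `N`-period equilibrium variance sequence for `Δ = σu = Sig0 = 1`:
`Σ̂₀ = 1` and `Σ̂ₙ = Σ̂_{n-1}/(1 + b̂_{N,n}²)` where `b̂_{N,n} = tb (N - n + 1)`. -/
noncomputable def SigH (tb : ℕ → ℝ) (N : ℕ) : ℕ → ℝ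
  | 0 => 1
  | n + 1 => SigH tb N n / (1 + (tb (N - n)) ^ 2)

/-- Kyle's `N`-period equilibrium trading intensities for `Δ = σu = Sig0 = 1`:
`β̂_{N,n} = b̂_{N,n}/√(Σ̂_{N,n-1})` with `b̂_{N,n} = tb (N - n + 1)`. -/
noncomputable def betaH (tb : ℕ → ℝ) (N n : ℕ) : ℝ :=
  tb (N - n + 1) / Real.sqrt (SigH tb N (n - 1))

/-! Two symmetries of the policy-iteration map do the work. Restarting the game after `k`
periods, with prior variance `Σₖ^β`, leaves the later coordinates of `T` unchanged. Scaling
`Σ₀` by `s²` and `β` by `1/s` leaves every `βₙ² Σₙ₋₁^β` invariant, so `Σ^β` scales by `s²`,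
`λ^β` by `s`, and `α^β` and `T` by `1/s`. Kyle's `(N+1)`-period equilibrium, with its first
period dropped, is the `N`-period equilibrium scaled in this way with `s = √Σ̂₁`, so
`T̃_{N+1}(x) = s⁻¹ T̃_N(s x)`; differentiating at `β̂_{N+1,N-1} = β̂_{N,N-2}/s` gives the claim. -/

section Shift

variable {Δ σu Sig0 : ℝ} {N k : ℕ} {β β' : ℕ → ℝ}

lemma kSig_shift (hβ : ∀ n, 1 ≤ n → n ≤ N → β' n = β (n + k)) :
    ∀ m ≤ N, kSig Δ σu Sig0 β (m + k) = kSig Δ σu (kSig Δ σu Sig0 β k) β' m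
  | 0, _ => by rw [zero_add, kSig]
  | m + 1, hm => by
    rw [show m + 1 + k = m + k + 1 by omega, kSig, kSig, kSig_shift hβ m (by omega),
      hβ (m + 1) le_add_self hm, show m + k + 1 = m + 1 + k by omega]

lemma kLam_shift (hβ : ∀ n, 1 ≤ n → n ≤ N → β' n = β (n + k)) {n : ℕ} (h1 : 1 ≤ n)
    (hn : n ≤ N) :
    kLam Δ σu Sig0 β (n + k) = kLam Δ σu (kSig Δ σu Sig0 β k) β' n := by
  rw [kLam, kLam, show n + k - 1 = n - 1 + k by omega, kSig_shift hβ (n - 1) (by omega),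
    hβ n h1 hn]

lemma kAlphaAux_shift (hβ : ∀ n, 1 ≤ n → n ≤ N → β' n = β (n + k)) :
    ∀ j ≤ N, kAlphaAux Δ σu Sig0 (N + k) β j = kAlphaAux Δ σu (kSig Δ σu Sig0 β k) N β' j
  | 0, _ => rfl
  | j + 1, hj => by
    rw [kAlphaAux, kAlphaAux, kAlphaAux_shift hβ j (by omega),
      show N + k - j = N - j + k by omega, kLam_shift hβ (by omega) (by omega)]

lemma kT_shift (hβ : ∀ n, 1 ≤ n → n ≤ N → β' n = β (n + k)) {n : ℕ} (h1 : 1 ≤ n)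
    (hn : n ≤ N) :
    kT Δ σu Sig0 (N + k) β (n + k) = kT Δ σu (kSig Δ σu Sig0 β k) N β' n := by
  rw [kT, kT, kAlpha, kAlpha, show N + k - (n + k) = N - n by omega,
    kAlphaAux_shift hβ (N - n) (by omega), kLam_shift hβ h1 hn]

end Shift

section Rescale

variable {Δ σu S s : ℝ} {N : ℕ} {β : ℕ → ℝ}

lemma kSig_rescale (hs : s ≠ 0) (m : ℕ) :
    kSig Δ σu (s ^ 2 * S) (fun n => β n / s) m = s ^ 2 * kSig Δ σu S β m := by
  induction m with
  | zero => rfl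
  | succ m ih =>
    rw [kSig, kSig, ih]
    field_simp

lemma kLam_rescale (hs : s ≠ 0) (n : ℕ) :
    kLam Δ σu (s ^ 2 * S) (fun n => β n / s) n = s * kLam Δ σu S β n := by
  rw [kLam, kLam, kSig_rescale hs]
  field_simp

lemma inv_mul_mul_mul_cancel₀ {G₀ : Type*} [CommGroupWithZero G₀] {s : G₀} (hs : s ≠ 0)
    (a b : G₀) : s⁻¹ * a * (s * b) = a * b := by
  rw [mul_mul_mul_comm, inv_mul_cancel₀ hs, one_mul]

lemma kAlphaAux_rescale (hs : s ≠ 0) (j : ℕ) :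
    kAlphaAux Δ σu (s ^ 2 * S) N (fun n => β n / s) j = s⁻¹ * kAlphaAux Δ σu S N β j := by
  induction j with
  | zero => simp [kAlphaAux]
  | succ j ih =>
    rw [kAlphaAux, kAlphaAux, ih, kLam_rescale hs, inv_mul_mul_mul_cancel₀ hs]
    generalize 1 - kAlphaAux Δ σu S N β j * kLam Δ σu S β (N - j) = X
    ring

lemma kT_rescale (hs : s ≠ 0) (n : ℕ) :
    kT Δ σu (s ^ 2 * S) N (fun n => β n / s) n = s⁻¹ * kT Δ σu S N β n := by
  rw [kT, kT, kAlpha, kAlpha, kAlphaAux_rescale hs, kLam_rescale hs]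
  simp only [mul_assoc (2 : ℝ), inv_mul_mul_mul_cancel₀ hs]
  generalize 1 - 2 * (kAlphaAux Δ σu S N β (N - n) * kLam Δ σu S β n) = P
  generalize 1 - kAlphaAux Δ σu S N β (N - n) * kLam Δ σu S β n = X
  ring

end Rescale

section Equilibrium

variable (tb : ℕ → ℝ)

lemma SigH_pos (N m : ℕ) : 0 < SigH tb N m := by
  induction m with
  | zero => simp [SigH]
  | succ m ih => rw [SigH]; positivity

lemma SigH_add (N m n : ℕ) : SigH tb N (m + n) = SigH tb N m * SigH tb (N - m) n := by
  induction n with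
  | zero => simp [SigH]
  | succ n ih => rw [← add_assoc, SigH, SigH, ih, Nat.sub_sub, mul_div_assoc]

lemma betaH_succ (N : ℕ) {n : ℕ} (hn : 1 ≤ n) :
    betaH tb (N + 1) (n + 1) = betaH tb N n / √(SigH tb (N + 1) 1) := by
  obtain ⟨m, rfl⟩ := Nat.exists_eq_add_of_le hn
  rw [betaH, betaH, Nat.add_sub_cancel, SigH_add, Nat.add_sub_cancel, Nat.add_sub_cancel_left,
    Real.sqrt_mul (SigH_pos tb _ _).le, div_div, mul_comm, Nat.add_sub_add_right]

noncomputable def kTtilde (N : ℕ) (x : ℝ) : ℝ :=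
  kT 1 1 1 N (fun n => if n = N - 2 then x else betaH tb N n) (N - 2)

lemma kTtilde_succ {N : ℕ} (hN : 3 ≤ N) (x : ℝ) :
    kTtilde tb (N + 1) x =
      (√(SigH tb (N + 1) 1))⁻¹ * kTtilde tb N (√(SigH tb (N + 1) 1) * x) := by
  set s := √(SigH tb (N + 1) 1)
  have hs : s ≠ 0 := (Real.sqrt_pos.mpr (SigH_pos tb _ _)).ne'
  set B : ℕ → ℝ := fun n => if n = N + 1 - 2 then x else betaH tb (N + 1) n
  set C : ℕ → ℝ := fun n => if n = N - 2 then s * x else betaH tb N n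
  have hBC : ∀ n, 1 ≤ n → n ≤ N → C n / s = B (n + 1) := by
    intro n h1 _
    by_cases hn : n = N - 2
    · simp [B, C, hn, show N - 2 + 1 = N + 1 - 2 by omega, hs]
    · simp only [B, C, if_neg hn, if_neg (show n + 1 ≠ N + 1 - 2 by omega),
        betaH_succ tb N h1, s]
  have hSig : kSig 1 1 1 B 1 = s ^ 2 * 1 := by
    rw [Real.sq_sqrt (SigH_pos tb _ _).le]
    simp only [B, kSig, if_neg (show 1 ≠ N + 1 - 2 by omega)]
    simp [SigH, betaH, add_comm]
  calc kTtilde tb (N + 1) x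
      = kT 1 1 1 (N + 1) B (N - 2 + 1) := by rw [show N - 2 + 1 = N + 1 - 2 by omega]; rfl
    _ = kT 1 1 (s ^ 2 * 1) N (fun n => C n / s) (N - 2) := by
      rw [kT_shift hBC (by omega) (by omega), hSig]
    _ = s⁻¹ * kTtilde tb N (s * x) := kT_rescale hs _

end Equilibrium

theorem derivative_independent_of_N_general (tb : ℕ → ℝ) :
    ∀ N : ℕ, 4 ≤ N →
      deriv (fun x =>
          kT 1 1 1 N (fun n => if n = N - 2 then x else betaH tb N n) (N - 2))
        (betaH tb N (N - 2)) =
      deriv (fun x =>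
          kT 1 1 1 (N - 1)
            (fun n => if n = (N - 1) - 2 then x else betaH tb (N - 1) n) ((N - 1) - 2))
        (betaH tb (N - 1) ((N - 1) - 2)) := by
  intro N hN
  obtain ⟨M, rfl⟩ : ∃ M, N = M + 1 := ⟨N - 1, by omega⟩
  change deriv (kTtilde tb (M + 1)) _ = deriv (kTtilde tb (M + 1 - 1)) _
  set s := √(SigH tb (M + 1) 1)
  have hs : s ≠ 0 := (Real.sqrt_pos.mpr (SigH_pos tb _ _)).ne'
  have hx : betaH tb (M + 1) (M + 1 - 2) = betaH tb M (M - 2) / s := by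
    rw [show M + 1 - 2 = M - 2 + 1 by omega, betaH_succ tb M (by omega)]
  rw [Nat.add_sub_cancel, hx, funext (kTtilde_succ tb (by omega : 3 ≤ M)),
    deriv_const_mul_field, deriv_comp_mul_left, smul_eq_mul, inv_mul_cancel_left₀ hs,
    mul_div_cancel₀ _ hs]

/-- With `Δ = σu = Sig0 = 1`, for every `N ≥ 4` the derivative at the equilibrium of
the `(N-2)`-coordinate policy-iteration map `T̃_N` (all coordinates other than
`N - 2` frozen at Kyle's `N`-period equilibrium) satisfies
`T̃_N'(β̂_{N,N-2}) = T̃_{N-1}'(β̂_{N-1,N-3})`; i.e. it does not depend on `N ≥ 3`. -/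
theorem derivative_independent_of_N (tb : ℕ → ℝ) (htb : KyleTB tb) :
    ∀ N : ℕ, 4 ≤ N →
      deriv (fun x =>
          kT 1 1 1 N (fun n => if n = N - 2 then x else betaH tb N n) (N - 2))
        (betaH tb N (N - 2)) =
      deriv (fun x =>
          kT 1 1 1 (N - 1)
            (fun n => if n = (N - 1) - 2 then x else betaH tb (N - 1) n) ((N - 1) - 2))
        (betaH tb (N - 1) ((N - 1) - 2)) :=
  derivative_independent_of_N_general tb
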